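/- Let R be a G-graded commutative ring and r a homogeneous element of R. The basic open set GX_r^{qp.R} = q.Spec_g(R) − qp-V_R^g(Rr) is empty if and only if r is nilpotent. -/

import Mathlib

/-- The graded radical `Gr(I)` of an ideal `I` of a `G`-graded commutative ring:
the set of all `r` such that every homogeneous component of `r` has some positive
power in `I`. -/
def gradedRadical {G R : Type*} [AddGroup G] [DecidableEq G] [CommRing R]
    (𝒜 : G → AddSubgroup R) [GradedRing 𝒜] (I : Ideal R) : Set R :=
  {r : R | ∀ g : G, ∃ n : ℕ, 0 < n ∧ (DirectSum.decompose 𝒜 r g : R) ^ n ∈ I}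

/-- An ideal is graded if it contains the homogeneous components of all its elements. -/
def IsGradedIdeal {G R : Type*} [AddGroup G] [DecidableEq G] [CommRing R]
    (𝒜 : G → AddSubgroup R) [GradedRing 𝒜] (I : Ideal R) : Prop :=
  ∀ (g : G) ⦃r : R⦄, r ∈ I → (DirectSum.decompose 𝒜 r g : R) ∈ I

/-- A graded prime ideal: a proper graded ideal such that `r * s ∈ P` for homogeneous
`r, s` implies `r ∈ P` or `s ∈ P`. -/
def IsGradedPrimeIdeal {G R : Type*} [AddGroup G] [DecidableEq G] [CommRing R]
    (𝒜 : G → AddSubgroup R) [GradedRing 𝒜] (P : Ideal R) : Prop :=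
  P ≠ ⊤ ∧ IsGradedIdeal 𝒜 P ∧
    ∀ ⦃r s : R⦄, SetLike.IsHomogeneousElem 𝒜 r → SetLike.IsHomogeneousElem 𝒜 s →
      r * s ∈ P → r ∈ P ∨ s ∈ P

/-- A graded quasi-primary ideal: a proper graded ideal such that `a * b ∈ q` for
homogeneous `a, b` implies `a ∈ Gr(q)` or `b ∈ Gr(q)`. -/
def IsGradedQuasiPrimaryIdeal {G R : Type*} [AddGroup G] [DecidableEq G] [CommRing R]
    (𝒜 : G → AddSubgroup R) [GradedRing 𝒜] (q : Ideal R) : Prop :=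
  q ≠ ⊤ ∧ IsGradedIdeal 𝒜 q ∧
    ∀ ⦃a b : R⦄, SetLike.IsHomogeneousElem 𝒜 a → SetLike.IsHomogeneousElem 𝒜 b →
      a * b ∈ q → a ∈ gradedRadical 𝒜 q ∨ b ∈ gradedRadical 𝒜 q

/-- The graded quasi-primary spectrum of `R`: the set of all graded quasi-primary ideals. -/
def qpSpecR {G R : Type*} [AddGroup G] [DecidableEq G] [CommRing R]
    (𝒜 : G → AddSubgroup R) [GradedRing 𝒜] : Set (Ideal R) :=
  {q : Ideal R | IsGradedQuasiPrimaryIdeal 𝒜 q}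

/-- The variety `qp-V_R^g(I) = { q ∈ q.Spec_g(R) : Gr(q) ⊇ I }`. -/
def qpVR {G R : Type*} [AddGroup G] [DecidableEq G] [CommRing R]
    (𝒜 : G → AddSubgroup R) [GradedRing 𝒜] (I : Ideal R) : Set (qpSpecR 𝒜) :=
  {q : qpSpecR 𝒜 | (I : Set R) ⊆ gradedRadical 𝒜 q.1}

/-- The quasi-Zariski topology on `q.Spec_g(R)`, generated by the complements of the
varieties of graded ideals. -/
def qpZariskiR {G R : Type*} [AddGroup G] [DecidableEq G] [CommRing R]
    (𝒜 : G → AddSubgroup R) [GradedRing 𝒜] : TopologicalSpace (qpSpecR 𝒜) :=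
  TopologicalSpace.generateFrom
    {U : Set (qpSpecR 𝒜) | ∃ I : Ideal R, IsGradedIdeal 𝒜 I ∧ U = (qpVR 𝒜 I)ᶜ}

/-
A homogeneous element lies in the graded radical of a graded ideal exactly when one of its
powers lies in the ideal. If `r` is not nilpotent, some prime `J` avoids `r`; the homogeneous
core of `J` is a graded prime, hence graded quasi-primary, ideal whose graded radical misses
`r`, so it lies in the basic open set. Conversely, if `r` is homogeneous and nilpotent, every
homogeneous component of a multiple `c * r` is of the form `c' * r`, hence nilpotent, so
`Rr ⊆ Gr(q)` for every `q`.
-/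

section GradedRadical

variable {G R : Type*} [AddGroup G] [DecidableEq G] [CommRing R]
  {𝒜 : G → AddSubgroup R} [GradedRing 𝒜]

theorem subset_gradedRadical_of_isGradedIdeal {I : Ideal R} (hI : IsGradedIdeal 𝒜 I) :
    (I : Set R) ⊆ gradedRadical 𝒜 I :=
  fun _ hx g => ⟨1, one_pos, by simpa using hI g hx⟩

theorem exists_pow_mem_of_mem_gradedRadical {I : Ideal R} {r : R}
    (hr : SetLike.IsHomogeneousElem 𝒜 r) (h : r ∈ gradedRadical 𝒜 I) :
    ∃ n, 0 < n ∧ r ^ n ∈ I := by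
  obtain ⟨d, hd⟩ := hr
  simpa only [DirectSum.decompose_of_mem_same 𝒜 hd] using h d

theorem mem_gradedRadical_of_forall_isNilpotent (I : Ideal R) {x : R}
    (hx : ∀ g, IsNilpotent (DirectSum.decompose 𝒜 x g : R)) : x ∈ gradedRadical 𝒜 I := by
  intro g
  obtain ⟨n, hn⟩ := hx g
  exact ⟨n + 1, n.succ_pos, by simp [pow_succ, hn]⟩

theorem isNilpotent_decompose_mul_of_isNilpotent {r : R} {d : G} (hd : r ∈ 𝒜 d)
    (hr : IsNilpotent r) (c : R) (g : G) :
    IsNilpotent (DirectSum.decompose 𝒜 (c * r) g : R) := by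
  rw [← sub_add_cancel g d, DirectSum.coe_decompose_mul_add_of_right_mem 𝒜 hd]
  exact (Commute.all _ r).isNilpotent_mul_left hr

theorem span_singleton_subset_gradedRadical_of_isNilpotent {r : R}
    (hr : SetLike.IsHomogeneousElem 𝒜 r) (hnil : IsNilpotent r) (I : Ideal R) :
    (Ideal.span {r} : Set R) ⊆ gradedRadical 𝒜 I := by
  obtain ⟨d, hd⟩ := hr
  intro x hx
  obtain ⟨c, rfl⟩ := Ideal.mem_span_singleton'.mp hx
  exact mem_gradedRadical_of_forall_isNilpotent I
    (isNilpotent_decompose_mul_of_isNilpotent hd hnil c)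

theorem IsGradedPrimeIdeal.isGradedQuasiPrimaryIdeal {P : Ideal R}
    (hP : IsGradedPrimeIdeal 𝒜 P) : IsGradedQuasiPrimaryIdeal 𝒜 P := by
  obtain ⟨hne, hgr, hprime⟩ := hP
  refine ⟨hne, hgr, fun a b ha hb hab => ?_⟩
  exact (hprime ha hb hab).imp (fun h => subset_gradedRadical_of_isGradedIdeal hgr h)
    (fun h => subset_gradedRadical_of_isGradedIdeal hgr h)

theorem Ideal.IsPrime.isGradedPrimeIdeal_homogeneousCore {J : Ideal R} (hJ : J.IsPrime) :
    IsGradedPrimeIdeal 𝒜 (J.homogeneousCore 𝒜).toIdeal := by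
  have hle : (J.homogeneousCore 𝒜).toIdeal ≤ J := Ideal.toIdeal_homogeneousCore_le 𝒜 J
  refine ⟨fun htop => hJ.ne_top (top_le_iff.mp (htop ▸ hle)),
    (J.homogeneousCore 𝒜).isHomogeneous, fun a b ha hb hab => ?_⟩
  exact (hJ.mem_or_mem (hle hab)).imp
    (Ideal.mem_homogeneousCore_of_homogeneous_of_mem ha)
    (Ideal.mem_homogeneousCore_of_homogeneous_of_mem hb)

theorem isNilpotent_of_forall_isGradedPrimeIdeal_mem_gradedRadical {r : R}
    (hr : SetLike.IsHomogeneousElem 𝒜 r)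
    (h : ∀ P : Ideal R, IsGradedPrimeIdeal 𝒜 P → r ∈ gradedRadical 𝒜 P) : IsNilpotent r := by
  rw [← mem_nilradical, nilradical_eq_sInf, Submodule.mem_sInf]
  intro J hJ
  have hcore := hJ.isGradedPrimeIdeal_homogeneousCore (𝒜 := 𝒜)
  obtain ⟨n, -, hn⟩ := exists_pow_mem_of_mem_gradedRadical hr (h _ hcore)
  exact hJ.mem_of_pow_mem n (Ideal.toIdeal_homogeneousCore_le 𝒜 J hn)

end GradedRadical

/-- The basic open set `GX_r^{qp.R}` is empty iff the homogeneous element `r` is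
nilpotent. -/
theorem gx_eq_empty_iff_isNilpotent {G R : Type*} [AddGroup G] [DecidableEq G]
    [CommRing R] (𝒜 : G → AddSubgroup R) [GradedRing 𝒜]
    (r : R) (hr : SetLike.IsHomogeneousElem 𝒜 r) :
    (qpVR 𝒜 (Ideal.span {r}))ᶜ = (∅ : Set (qpSpecR 𝒜)) ↔ IsNilpotent r := by
  rw [Set.compl_empty_iff, Set.eq_univ_iff_forall]
  refine ⟨fun hV => ?_, fun hnil q => span_singleton_subset_gradedRadical_of_isNilpotent hr hnil q⟩
  refine isNilpotent_of_forall_isGradedPrimeIdeal_mem_gradedRadical hr fun P hP => ?_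
  exact hV ⟨P, hP.isGradedQuasiPrimaryIdeal⟩ (Ideal.subset_span rfl)
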